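/- arXiv:2012.14509 — 6 statements merged into one kernel-verified Lean document; each statement's English description precedes it below -/
import Mathlib

section
/- For any integers p, q with 0 ≤ p ≤ q, q ≥ 1, gcd(p,q)=1, and any x ∈ ℤ^d, the normalized d-dimensional Gauss sum G(p/q;x) := q^{-d} ∑_{n ∈ {1,...,q}^d} e^{2πi(|n|²p/q + x·n/q)} satisfies |G(p/q;x)| ≤ (2/q)^{d/2}. -/
/-!
The `d`-dimensional sum factors into a product of `d` one-dimensional quadratic sums
`S = ∑ z ψ(a z² + b z)` over `ZMod q`, with `a = p` a unit. Expanding `|S|²` and substituting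
`z = w + h` leaves `∑_h ψ(a h² + b h) ∑_w ψ(2 a h w)`; the inner sum is `q` or `0` according as
`2 a h = 0` or not, and `2 h = 0` has at most two solutions in the cyclic group `ZMod q`.
Hence `|S|² ≤ 2 q`.
-/

open Finset Complex ComplexConjugate

namespace AddChar

variable {R : Type*} [CommRing R] [Fintype R] [DecidableEq R] {ψ : AddChar R ℂ}

theorem norm_sum_quadratic_sq_le (hψ : ψ.IsPrimitive) (a b : R) :
    ‖∑ z, ψ (a * z ^ 2 + b * z)‖ ^ 2 ≤ Fintype.card R * #{h | 2 * a * h = 0} := by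
  set f : R → R := fun z => a * z ^ 2 + b * z
  have hshift (w h : R) : f (w + h) - f w = f h + w * (2 * a * h) := by simp only [f]; ring
  have hcorr : (∑ z, ψ (f z)) * conj (∑ z, ψ (f z)) =
      Fintype.card R * ∑ h with 2 * a * h = 0, ψ (f h) :=
    calc _ = ∑ w, ∑ h, ψ (f (w + h) - f w) := by
          rw [map_sum, sum_mul_sum, sum_comm]
          refine sum_congr rfl fun w _ => ?_
          rw [← Equiv.sum_comp (Equiv.addLeft w)]
          simp [map_sub_eq_div, ← map_neg_eq_conj, div_eq_mul_inv, map_neg_eq_inv]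
      _ = ∑ h, ψ (f h) * ∑ w, ψ (w * (2 * a * h)) := by
          rw [sum_comm]
          simp only [hshift, map_add_eq_mul, mul_sum]
      _ = _ := by simp [sum_mulShift _ hψ, mul_sum, sum_filter, mul_comm]
  calc ‖∑ z, ψ (f z)‖ ^ 2 = ‖Fintype.card R * ∑ h with 2 * a * h = 0, ψ (f h)‖ := by
        rw [← hcorr, norm_mul, Complex.norm_conj, sq]
    _ ≤ Fintype.card R * #{h | 2 * a * h = 0} := by
        rw [norm_mul, Complex.norm_natCast]
        gcongr
        exact (norm_sum_le _ _).trans (by simp [norm_apply])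

end AddChar

namespace ZMod

variable {N : ℕ} [NeZero N]

theorem card_two_mul_eq_zero_le : #{h : ZMod N | 2 * h = 0} ≤ 2 := by
  simpa [nsmul_eq_mul] using IsAddCyclic.card_nsmul_eq_zero_le (α := ZMod N) two_pos

theorem sum_Icc_intCast {M : Type*} [AddCommMonoid M] (f : ZMod N → M) :
    ∑ n ∈ Icc (1 : ℤ) N, f n = ∑ z, f z := by
  have hinj : Set.InjOn (fun n : ℤ => (n : ZMod N)) (Icc (1 : ℤ) N) := by
    intro m hm n hn hmn
    simp only [coe_Icc, Set.mem_Icc] at hm hn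
    have hdvd : (N : ℤ) ∣ m - n := (intCast_eq_intCast_iff_dvd_sub n m N).mp hmn.symm
    have := Int.eq_zero_of_abs_lt_dvd hdvd (abs_sub_lt_iff.mpr ⟨by omega, by omega⟩)
    omega
  rw [← sum_image hinj]
  congr
  apply eq_univ_of_card
  rw [card_image_of_injOn hinj, Int.card_Icc, ZMod.card]
  omega

theorem norm_sum_stdAddChar_quadratic_le {a : ZMod N} (ha : IsUnit a) (b : ZMod N) :
    ‖∑ z, stdAddChar (a * z ^ 2 + b * z)‖ ≤ √(2 * N) := by
  have hker : #{h : ZMod N | 2 * a * h = 0} = #{h : ZMod N | 2 * h = 0} := by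
    simp only [mul_right_comm 2 a, ha.mul_left_eq_zero]
  apply Real.le_sqrt_of_sq_le
  calc _ ≤ (N : ℝ) * #{h : ZMod N | 2 * h = 0} := by
        simpa [hker] using AddChar.norm_sum_quadratic_sq_le (isPrimitive_stdAddChar N) a b
    _ ≤ N * 2 := by gcongr; exact_mod_cast card_two_mul_eq_zero_le
    _ = 2 * N := mul_comm _ _

end ZMod

theorem norm_sum_Icc_exp_quadratic_le {N : ℕ} [NeZero N] {p : ℤ} (hp : IsCoprime p N) (x : ℤ) :
    ‖∑ n ∈ Icc (1 : ℤ) N, exp (2 * Real.pi * I * (((n : ℂ) ^ 2 * p + x * n) / N))‖ ≤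
      √(2 * N) := by
  have hterm (n : ℤ) : exp (2 * Real.pi * I * (((n : ℂ) ^ 2 * p + x * n) / N)) =
      ZMod.stdAddChar ((p : ZMod N) * (n : ZMod N) ^ 2 + (x : ZMod N) * (n : ZMod N)) := by
    have hcast : (p : ZMod N) * (n : ZMod N) ^ 2 + (x : ZMod N) * (n : ZMod N) =
        ((p * n ^ 2 + x * n : ℤ) : ZMod N) := by push_cast; ring
    rw [hcast, ZMod.stdAddChar_coe]
    push_cast
    ring_nf
  simp only [hterm,
    ZMod.sum_Icc_intCast fun z : ZMod N => ZMod.stdAddChar ((p : ZMod N) * z ^ 2 + (x : ZMod N) * z)]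
  exact ZMod.norm_sum_stdAddChar_quadratic_le ⟨ZMod.unitOfIsCoprime p hp, rfl⟩ x

theorem Real.inv_pow_mul_sqrt_two_mul_pow {q : ℝ} (hq : 0 < q) (d : ℕ) :
    (q ^ d)⁻¹ * √(2 * q) ^ d = (2 / q) ^ ((d : ℝ) / 2) := by
  have hroot : q⁻¹ * √(2 * q) = √(2 / q) := by
    rw [← Real.sqrt_sq (inv_nonneg.2 hq.le), ← Real.sqrt_mul (sq_nonneg _)]
    congr 1
    field_simp
  rw [Real.rpow_div_two_eq_sqrt _ (by positivity), Real.rpow_natCast, ← hroot, mul_pow, inv_pow]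

theorem gauss_sum_bound_general (d : ℕ) (p q : ℤ) (hq : 1 ≤ q)
    (hcop : IsCoprime p q) (x : Fin d → ℤ) :
    ‖(q : ℂ) ^ (-(d : ℤ)) *
      ∑ n ∈ Fintype.piFinset (fun _ : Fin d => Finset.Icc (1 : ℤ) q),
        Complex.exp (2 * Real.pi * Complex.I *
          (((∑ j, (n j : ℂ) ^ 2) * p + ∑ j, (x j : ℂ) * n j) / q))‖ ≤
    (2 / (q : ℝ)) ^ ((d : ℝ) / 2) := by
  lift q to ℕ using (by omega)
  have : NeZero q := ⟨by omega⟩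
  have hfactor : ∑ n ∈ Fintype.piFinset (fun _ : Fin d => Icc (1 : ℤ) q),
        exp (2 * Real.pi * I * (((∑ j, (n j : ℂ) ^ 2) * p + ∑ j, (x j : ℂ) * n j) / q)) =
      ∏ j, ∑ n ∈ Icc (1 : ℤ) q, exp (2 * Real.pi * I * (((n : ℂ) ^ 2 * p + x j * n) / q)) := by
    rw [prod_univ_sum]
    refine sum_congr rfl fun n _ => ?_
    rw [← exp_sum, ← mul_sum, ← sum_div, sum_add_distrib, sum_mul]
  push_cast
  calc _ = ((q : ℝ) ^ d)⁻¹ *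
        ∏ j, ‖∑ n ∈ Icc (1 : ℤ) q, exp (2 * Real.pi * I * (((n : ℂ) ^ 2 * p + x j * n) / q))‖ := by
        rw [hfactor, norm_mul, norm_prod, norm_zpow, Complex.norm_natCast, zpow_neg, zpow_natCast]
    _ ≤ ((q : ℝ) ^ d)⁻¹ * √(2 * q) ^ d := by
        gcongr
        exact (prod_le_prod (fun _ _ => norm_nonneg _) fun j _ =>
          norm_sum_Icc_exp_quadratic_le hcop (x j)).trans_eq (by simp)
    _ = _ := Real.inv_pow_mul_sqrt_two_mul_pow (by norm_cast; omega) d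

/-- Dimension-free bound for the normalized `d`-dimensional Gauss sum:
`|G(p/q; x)| ≤ (2/q)^(d/2)` for `0 ≤ p ≤ q`, `q ≥ 1`, `gcd(p,q)=1`. -/
theorem gauss_sum_bound (d : ℕ) (p q : ℤ) (hp : 0 ≤ p) (hpq : p ≤ q) (hq : 1 ≤ q)
    (hcop : IsCoprime p q) (x : Fin d → ℤ) :
    ‖(q : ℂ) ^ (-(d : ℤ)) *
      ∑ n ∈ Fintype.piFinset (fun _ : Fin d => Finset.Icc (1 : ℤ) q),
        Complex.exp (2 * Real.pi * Complex.I *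
          (((∑ j, (n j : ℂ) ^ 2) * p + ∑ j, (x j : ℂ) * n j) / q))‖ ≤
    (2 / (q : ℝ)) ^ ((d : ℝ) / 2) :=
  gauss_sum_bound_general d p q hq hcop x
end

section
/- For every T₀ > 0 there exists a constant C(T₀) > 0 such that for all T ≥ T₀ and all y ∈ [-1/2, 1/2)^d, the sum over x ∈ ℤ^d \ {0} of e^{-T|x+y|²} is at most C(T₀)^d · e^{-T/4}. -/
/-!
For `x ≠ 0` and `|yⱼ| ≤ 1/2` each coordinate satisfies `(xⱼ + yⱼ)² ≥ xⱼ²/4`, and `|x|² ≥ 1`.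
Hence for `T ≥ T₀`,
`T |x + y|² ≥ T |x|²/4 = T/4 + T (|x|² - 1)/4 ≥ T/4 + T₀ (|x|² - 1)/4 ≥ T/4 + T₀ ∑ⱼ (xⱼ² - 1)/4`,
so each term is at most `e^{-T/4} ∏ⱼ w(xⱼ)` with the one-dimensional weight
`w(n) = e^{-T₀ (n² - 1)/4}`, and summing the product over `ℤ^d` gives `C^d` with `C = ∑ₙ w(n)`.
-/

open Real Finset

lemma summable_exp_neg_mul_int_sq_sub {a : ℝ} (ha : 0 < a) (b : ℝ) :
    Summable fun n : ℤ => exp (-a * ((n : ℝ) ^ 2 - b)) := by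
  have hnat : Summable fun n : ℕ => exp (-a * (n : ℝ) ^ 2) :=
    summable_exp_nat_mul_of_ge (neg_lt_zero.2 ha) fun n => by
      exact_mod_cast Nat.le_self_pow two_ne_zero n
  have hshift : Summable fun n : ℕ => exp (-a * ((n : ℝ) ^ 2 - b)) := by
    refine (hnat.mul_left (exp (a * b))).congr fun n => ?_
    rw [← exp_add]
    ring_nf
  exact .of_nat_of_neg hshift (by simpa using hshift)

lemma sum_prod_le_tsum_pow {ι κ : Type*} [Fintype κ] {f : ι → ℝ} (hf0 : ∀ i, 0 ≤ f i)
    (hf : Summable f) (t : Finset (κ → ι)) :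
    ∑ v ∈ t, ∏ j, f (v j) ≤ (∑' i, f i) ^ Fintype.card κ := by
  classical
  set B : κ → Finset ι := fun j => t.image (· j)
  calc ∑ v ∈ t, ∏ j, f (v j) ≤ ∑ v ∈ Fintype.piFinset B, ∏ j, f (v j) :=
        sum_le_sum_of_subset_of_nonneg
          (fun v hv => Fintype.mem_piFinset.2 fun j => mem_image_of_mem _ hv)
          (fun v _ _ => prod_nonneg fun j _ => hf0 _)
    _ = ∏ j, ∑ i ∈ B j, f i := (prod_univ_sum B fun _ i => f i).symm
    _ ≤ ∏ _j : κ, ∑' i, f i :=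
        prod_le_prod (fun j _ => sum_nonneg fun i _ => hf0 i)
          fun j _ => hf.sum_le_tsum _ fun i _ => hf0 i
    _ = (∑' i, f i) ^ Fintype.card κ := by rw [prod_const, card_univ]

lemma sq_div_four_le_sq_add (n : ℤ) {y : ℝ} (hy : |y| ≤ 1 / 2) :
    (n : ℝ) ^ 2 / 4 ≤ (n + y) ^ 2 := by
  have h : |(n : ℝ)| / 2 ≤ |n + y| := by
    rcases eq_or_ne n 0 with rfl | hn
    · simp
    · have h1 : (1 : ℝ) ≤ |(n : ℝ)| := by exact_mod_cast Int.one_le_abs hn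
      have h2 := abs_add_le ((n : ℝ) + y) (-y)
      rw [add_neg_cancel_right, abs_neg] at h2
      linarith
  calc (n : ℝ) ^ 2 / 4 = (|(n : ℝ)| / 2) ^ 2 := by rw [div_pow, sq_abs]; norm_num
    _ ≤ |(n : ℝ) + y| ^ 2 := pow_le_pow_left₀ (by positivity) h 2
    _ = (n + y) ^ 2 := sq_abs _

lemma exp_neg_mul_sum_sq_add_le {κ : Type*} [Fintype κ] {T₀ T : ℝ} (hT₀ : 0 ≤ T₀)
    (hT : T₀ ≤ T) {x : κ → ℤ} (hx : x ≠ 0) {y : κ → ℝ} (hy : ∀ j, |y j| ≤ 1 / 2) :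
    exp (-T * ∑ j, ((x j : ℝ) + y j) ^ 2) ≤
      exp (-T / 4) * ∏ j, exp (-(T₀ / 4) * ((x j : ℝ) ^ 2 - 1)) := by
  rw [← exp_sum, ← exp_add, exp_le_exp, ← mul_sum, sum_sub_distrib, sum_const, card_univ,
    nsmul_one]
  obtain ⟨j₀, hj₀⟩ := Function.ne_iff.1 hx
  have hcard : (1 : ℝ) ≤ Fintype.card κ := by exact_mod_cast Fintype.card_pos_iff.2 ⟨j₀⟩
  have hQ : 1 ≤ ∑ j, (x j : ℝ) ^ 2 :=
    ((one_le_sq_iff_one_le_abs _).2 (by exact_mod_cast Int.one_le_abs hj₀)).trans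
      (single_le_sum (fun j _ => sq_nonneg (x j : ℝ)) (mem_univ j₀))
  have hS : (∑ j, (x j : ℝ) ^ 2) / 4 ≤ ∑ j, ((x j : ℝ) + y j) ^ 2 := by
    rw [sum_div]
    exact sum_le_sum fun j _ => sq_div_four_le_sq_add _ (hy j)
  nlinarith [mul_le_mul_of_nonneg_left hS (hT₀.trans hT),
    mul_nonneg (sub_nonneg.2 hT) (sub_nonneg.2 hQ), mul_nonneg hT₀ (sub_nonneg.2 hcard)]

/-- For every `T₀ > 0` there is a constant `C(T₀) > 0`, independent of the dimension,
such that `∑_{x ∈ ℤ^d \ {0}} e^{-T|x+y|²} ≤ C(T₀)^d e^{-T/4}` uniformly in `T ≥ T₀`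
and `y ∈ [-1/2, 1/2)^d`. -/
theorem lattice_gaussian_tail (T₀ : ℝ) (hT₀ : 0 < T₀) :
    ∃ C : ℝ, 0 < C ∧ ∀ (d : ℕ) (T : ℝ) (y : Fin d → ℝ), T₀ ≤ T →
      (∀ j, y j ∈ Set.Ico (-(1 : ℝ) / 2) (1 / 2)) →
      (∑' x : {x : Fin d → ℤ // x ≠ 0},
        Real.exp (-T * ∑ j, ((x.1 j : ℝ) + y j) ^ 2)) ≤ C ^ d * Real.exp (-T / 4) := by
  set w : ℤ → ℝ := fun n => exp (-(T₀ / 4) * ((n : ℝ) ^ 2 - 1))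
  have hw0 : ∀ n, 0 ≤ w n := fun n => (exp_pos _).le
  have hw : Summable w := summable_exp_neg_mul_int_sq_sub (by positivity) 1
  refine ⟨∑' n, w n, hw.tsum_pos hw0 0 (exp_pos _), fun d T y hT hy => ?_⟩
  have hy' : ∀ j, |y j| ≤ 1 / 2 := fun j => abs_le.2 ⟨by linarith [(hy j).1], (hy j).2.le⟩
  refine tsum_le_of_sum_le' (by positivity) fun s => ?_
  calc ∑ x ∈ s, exp (-T * ∑ j, ((x.1 j : ℝ) + y j) ^ 2)
      ≤ ∑ x ∈ s, exp (-T / 4) * ∏ j, w (x.1 j) :=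
        sum_le_sum fun x _ => exp_neg_mul_sum_sq_add_le hT₀.le hT x.2 hy'
    _ = exp (-T / 4) * ∑ v ∈ s.map (.subtype (· ≠ 0)), ∏ j, w (v j) := by rw [mul_sum, sum_map]; rfl
    _ ≤ exp (-T / 4) * (∑' n, w n) ^ d := by
        gcongr
        simpa using sum_prod_le_tsum_pow hw0 hw (s.map (.subtype (· ≠ 0)))
    _ = (∑' n, w n) ^ d * exp (-T / 4) := mul_comm _ _
end

section
/- Let d ≥ 5 and let t > 0 be such that λ = t² is a positive integer. Then |S_t^{d-1} ∩ ℤ^d| ≤ |B_t²(d) ∩ ℤ^d| ≤ (2t+1)⁴ |S_t^{d-1} ∩ ℤ^d|. -/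
/-!
Every lattice point of the ball of radius `√λ` can be moved onto the sphere of radius `√λ` by
changing only four of its coordinates: the remaining coordinates contribute at most `λ` to the
squared norm, and the deficit is a sum of four squares (Lagrange). The point is recovered from the
resulting sphere point together with its four original coordinates, each of absolute value at most
`√λ`, so the ball has at most `(2√λ + 1)⁴` times as many lattice points as the sphere.
-/

open Finset Function

def latticeBall (ι : Type*) [Fintype ι] (n : ℕ) : Set (ι → ℤ) :=
  {x | ∑ j, x j ^ 2 ≤ (n : ℤ)}

def latticeSphere (ι : Type*) [Fintype ι] (n : ℕ) : Set (ι → ℤ) :=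
  {x | ∑ j, x j ^ 2 = (n : ℤ)}

noncomputable def intBox (m k : ℕ) : Finset (Fin m → ℤ) :=
  Fintype.piFinset fun _ => Icc (-(k : ℤ)) k

theorem card_intBox (m k : ℕ) : (intBox m k).card = (2 * k + 1) ^ m := by
  simp only [intBox, Fintype.card_piFinset, Int.card_Icc, prod_const, card_univ,
    Fintype.card_fin]
  congr 1
  omega

theorem Int.abs_le_sqrt_of_sq_le {z : ℤ} {n : ℕ} (h : z ^ 2 ≤ n) : |z| ≤ n.sqrt := by
  have : z.natAbs ≤ n.sqrt := Nat.le_sqrt'.mpr (by zify; rwa [sq_abs])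
  rw [Int.abs_eq_natAbs]
  exact_mod_cast this

theorem Nat.exists_sum_four_sq_eq (m : ℕ) : ∃ v : Fin 4 → ℤ, ∑ i, v i ^ 2 = m := by
  obtain ⟨a, b, c, d, h⟩ := Nat.sum_four_squares m
  exact ⟨![a, b, c, d], by
    simp only [Fin.sum_univ_four, Matrix.cons_val_zero, Matrix.cons_val_one, Matrix.cons_val]
    exact_mod_cast h⟩

theorem Function.sum_extend_embedding {κ ι α M : Type*} [Fintype κ] [Fintype ι]
    [DecidableEq ι] [AddCommMonoid M] (e : κ ↪ ι) (v : κ → α) (x : ι → α)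
    (φ : α → M) :
    ∑ j, φ (extend e v x j) = ∑ i, φ (v i) + ∑ j ∈ (univ.map e)ᶜ, φ (x j) := by
  rw [← sum_add_sum_compl (univ.map e), sum_map]
  congr 1
  · exact sum_congr rfl fun i _ => by rw [e.injective.extend_apply]
  · refine sum_congr rfl fun j hj => ?_
    rw [extend_apply']
    rintro ⟨i, rfl⟩
    simp at hj

section Lattice

variable {ι : Type*} [Fintype ι] {n : ℕ}

theorem latticeSphere_subset_latticeBall : latticeSphere ι n ⊆ latticeBall ι n :=
  fun _ hx => le_of_eq hx

theorem abs_le_sqrt_of_mem_latticeBall {x : ι → ℤ} (hx : x ∈ latticeBall ι n) (j : ι) :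
    |x j| ≤ n.sqrt :=
  Int.abs_le_sqrt_of_sq_le ((single_le_sum (fun i _ => sq_nonneg (x i)) (mem_univ j)).trans hx)

theorem latticeBall_finite : (latticeBall ι n).Finite := by
  refine (Set.Finite.pi fun _ : ι => Set.finite_Icc (-(n.sqrt : ℤ)) n.sqrt).subset ?_
  intro x hx j _
  exact abs_le.mp (abs_le_sqrt_of_mem_latticeBall hx j)

theorem exists_extend_mem_latticeSphere [DecidableEq ι] (e : Fin 4 ↪ ι) {x : ι → ℤ}
    (hx : x ∈ latticeBall ι n) : ∃ v : Fin 4 → ℤ, extend e v x ∈ latticeSphere ι n := by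
  set tail := ∑ j ∈ (univ.map e)ᶜ, x j ^ 2
  have htail : tail ≤ n := (sum_le_univ_sum_of_nonneg fun j => sq_nonneg (x j)).trans hx
  obtain ⟨v, hv⟩ := Nat.exists_sum_four_sq_eq (n - tail).toNat
  refine ⟨v, ?_⟩
  change ∑ j, extend e v x j ^ 2 = n
  rw [sum_extend_embedding e v x (· ^ 2), hv, Int.toNat_of_nonneg (by omega)]
  omega

theorem ncard_latticeBall_le (e : Fin 4 ↪ ι) :
    (latticeBall ι n).ncard ≤ (latticeSphere ι n).ncard * (2 * n.sqrt + 1) ^ 4 := by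
  classical
  choose! v hv using fun x (hx : x ∈ latticeBall ι n) => exists_extend_mem_latticeSphere e hx
  let f : (ι → ℤ) → (ι → ℤ) × (Fin 4 → ℤ) := fun x => (extend e (v x) x, x ∘ e)
  have hmaps : Set.MapsTo f (latticeBall ι n) (latticeSphere ι n ×ˢ intBox 4 n.sqrt) := by
    intro x hx
    refine ⟨hv x hx, ?_⟩
    rw [mem_coe, intBox, Fintype.mem_piFinset]
    exact fun i => mem_Icc.mpr <| abs_le.mp (abs_le_sqrt_of_mem_latticeBall hx (e i))
  have hinj : Set.InjOn f (latticeBall ι n) := by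
    intro x _ x' _ hxx'
    obtain ⟨hext, hhead⟩ := Prod.mk.inj hxx'
    funext j
    by_cases hj : ∃ i, e i = j
    · obtain ⟨i, rfl⟩ := hj
      exact congrFun hhead i
    · rw [← extend_apply' (v x) x j hj, ← extend_apply' (v x') x' j hj, hext]
  have hfin : (latticeSphere ι n ×ˢ (intBox 4 n.sqrt : Set (Fin 4 → ℤ))).Finite :=
    (latticeBall_finite.subset latticeSphere_subset_latticeBall).prod
      (intBox 4 n.sqrt).finite_toSet
  calc (latticeBall ι n).ncard
      ≤ (latticeSphere ι n ×ˢ (intBox 4 n.sqrt : Set (Fin 4 → ℤ))).ncard :=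
        Set.ncard_le_ncard_of_injOn f hmaps hinj hfin
    _ = (latticeSphere ι n).ncard * (2 * n.sqrt + 1) ^ 4 := by
        rw [Set.ncard_prod, Set.ncard_coe_finset, card_intBox]

end Lattice

theorem sphere_ball_card_comparison_general (d lam : ℕ) (hd : 5 ≤ d) :
    ({x : Fin d → ℤ | ∑ j, (x j) ^ 2 = (lam : ℤ)}.ncard : ℝ) ≤
        {x : Fin d → ℤ | ∑ j, (x j) ^ 2 ≤ (lam : ℤ)}.ncard ∧
      ({x : Fin d → ℤ | ∑ j, (x j) ^ 2 ≤ (lam : ℤ)}.ncard : ℝ) ≤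
        (2 * Real.sqrt lam + 1) ^ 4 *
          {x : Fin d → ℤ | ∑ j, (x j) ^ 2 = (lam : ℤ)}.ncard := by
  change ((latticeSphere (Fin d) lam).ncard : ℝ) ≤ (latticeBall (Fin d) lam).ncard ∧
    ((latticeBall (Fin d) lam).ncard : ℝ) ≤
      (2 * Real.sqrt lam + 1) ^ 4 * (latticeSphere (Fin d) lam).ncard
  refine ⟨mod_cast Set.ncard_le_ncard latticeSphere_subset_latticeBall latticeBall_finite, ?_⟩
  calc ((latticeBall (Fin d) lam).ncard : ℝ)
      ≤ (latticeSphere (Fin d) lam).ncard * (2 * lam.sqrt + 1) ^ 4 :=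
        mod_cast ncard_latticeBall_le (Fin.castLEEmb (by omega))
    _ ≤ (2 * Real.sqrt lam + 1) ^ 4 * (latticeSphere (Fin d) lam).ncard := by
        rw [mul_comm]
        gcongr
        exact Real.nat_sqrt_le_real_sqrt

/-- For `d ≥ 5` and `λ = t² ∈ ℕ`, `λ ≥ 1`, with `t = √λ`:
`|S_t^{d-1} ∩ ℤ^d| ≤ |B_t²(d) ∩ ℤ^d| ≤ (2t+1)⁴ |S_t^{d-1} ∩ ℤ^d|`. -/
theorem sphere_ball_card_comparison (d lam : ℕ) (hd : 5 ≤ d) (hlam : 1 ≤ lam) :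
    ({x : Fin d → ℤ | ∑ j, (x j) ^ 2 = (lam : ℤ)}.ncard : ℝ) ≤
        {x : Fin d → ℤ | ∑ j, (x j) ^ 2 ≤ (lam : ℤ)}.ncard ∧
      ({x : Fin d → ℤ | ∑ j, (x j) ^ 2 ≤ (lam : ℤ)}.ncard : ℝ) ≤
        (2 * Real.sqrt lam + 1) ^ 4 *
          {x : Fin d → ℤ | ∑ j, (x j) ^ 2 = (lam : ℤ)}.ncard :=
  sphere_ball_card_comparison_general d lam hd
end

section
/- Let d ≥ 2, λ = t² ∈ ℕ, κ(d,λ) = √(λ/d), and 𝔪_t(ξ) := |S_t ∩ ℤ^d|^{-1} ∑_{x ∈ S_t ∩ ℤ^d} e^{2πi ξ·x}. Then |𝔪_t(ξ) − (−1)^λ| ≤ 2π² κ(d,λ)² ‖ξ + (1/2,...,1/2)‖² for all ξ ∈ 𝕋^d, where ‖η‖² = ∑_j dist(η_j, ℤ)². -/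
/-! On a lattice point of the sphere `|x|² = λ` we have `∑ x_j ≡ ∑ x_j² = λ (mod 2)`, so shifting
`ξ` by `(1/2, …, 1/2)` multiplies every term of the multiplier by `(-1)^λ`, and shifting by an
integer vector changes nothing: it suffices to bound `|𝔪_t(θ) - 1|` for
`θ = ξ + 1/2 - round (ξ + 1/2)`. As the sphere is symmetric under `x ↦ -x`, `𝔪_t(θ)` is the
average of `cos (2π θ·x)`, and `|cos s - 1| ≤ s²/2`. Finally the coordinate sign changes and
transpositions preserve the sphere, whence `∑_{x ∈ S} x_j x_k = δ_{jk} |S| λ / d` and the average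
of `(θ·x)²` is exactly `(λ/d) |θ|²`. -/

open Finset Complex

section LatticeSphere

variable {ι : Type*} [Fintype ι] {S : Finset (ι → ℤ)} {n : ℕ}

lemma sum_comp_eq_sum_of_involutive (hS : ∀ x, x ∈ S ↔ ∑ j, x j ^ 2 = (n : ℤ))
    {M : Type*} [AddCommMonoid M] (e : (ι → ℤ) → ι → ℤ) (he : Function.Involutive e)
    (hsq : ∀ x, ∑ j, e x j ^ 2 = ∑ j, x j ^ 2) (f : (ι → ℤ) → M) :
    ∑ x ∈ S, f (e x) = ∑ x ∈ S, f x :=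
  sum_equiv (he.toPerm e) (fun x => by simp [hS, hsq]) (fun _ _ => rfl)

lemma sum_coord_mul_coord_eq_zero [DecidableEq ι] (hS : ∀ x, x ∈ S ↔ ∑ j, x j ^ 2 = (n : ℤ))
    {j k : ι} (hjk : j ≠ k) : ∑ x ∈ S, x j * x k = 0 := by
  have hflip : Function.Involutive fun x : ι → ℤ => Function.update x k (-x k) := fun x => by
    ext i; by_cases hi : i = k <;> simp [hi]
  have hsq (x : ι → ℤ) : ∑ i, Function.update x k (-x k) i ^ 2 = ∑ i, x i ^ 2 :=
    Fintype.sum_congr _ _ fun i => by by_cases hi : i = k <;> simp [hi]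
  have h := sum_comp_eq_sum_of_involutive hS _ hflip hsq fun x => x j * x k
  simp only [Function.update_of_ne hjk, Function.update_self, mul_neg, sum_neg_distrib] at h
  linarith

lemma sum_coord_sq_eq [DecidableEq ι] (hS : ∀ x, x ∈ S ↔ ∑ j, x j ^ 2 = (n : ℤ)) (j k : ι) :
    ∑ x ∈ S, x j ^ 2 = ∑ x ∈ S, x k ^ 2 := by
  have hswap : Function.Involutive fun x : ι → ℤ => x ∘ Equiv.swap j k := fun x => by
    ext i; simp
  have hsq (x : ι → ℤ) : ∑ i, (x ∘ Equiv.swap j k) i ^ 2 = ∑ i, x i ^ 2 :=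
    Equiv.sum_comp (Equiv.swap j k) fun i => x i ^ 2
  simpa using sum_comp_eq_sum_of_involutive hS _ hswap hsq fun x => x k ^ 2

lemma card_mul_sum_coord_sq (hS : ∀ x, x ∈ S ↔ ∑ j, x j ^ 2 = (n : ℤ)) (j : ι) :
    (Fintype.card ι : ℤ) * ∑ x ∈ S, x j ^ 2 = #S * n := by
  classical
  calc (Fintype.card ι : ℤ) * ∑ x ∈ S, x j ^ 2 = ∑ k : ι, ∑ x ∈ S, x k ^ 2 := by
        simp [sum_coord_sq_eq hS _ j]
    _ = ∑ x ∈ S, ∑ k, x k ^ 2 := sum_comm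
    _ = #S * n := by simp [sum_congr rfl fun x hx => (hS x).1 hx]

lemma sum_coord_mul_coord [DecidableEq ι] (hS : ∀ x, x ∈ S ↔ ∑ j, x j ^ 2 = (n : ℤ))
    (j k : ι) :
    ∑ x ∈ S, (x j : ℝ) * x k = if j = k then (#S : ℝ) * (n / Fintype.card ι) else 0 := by
  split_ifs with hjk
  · subst hjk
    have hcard : (Fintype.card ι : ℝ) ≠ 0 := by
      have := Fintype.card_pos_iff.2 ⟨j⟩; positivity
    rw [mul_div_assoc', eq_div_iff hcard]
    exact_mod_cast by simpa [sq, mul_comm] using card_mul_sum_coord_sq hS j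
  · exact_mod_cast sum_coord_mul_coord_eq_zero hS hjk

lemma sum_dot_sq (hS : ∀ x, x ∈ S ↔ ∑ j, x j ^ 2 = (n : ℤ)) (θ : ι → ℝ) :
    ∑ x ∈ S, (∑ j, θ j * x j) ^ 2 = (#S : ℝ) * (n / Fintype.card ι) * ∑ j, θ j ^ 2 := by
  classical
  calc ∑ x ∈ S, (∑ j, θ j * x j) ^ 2
      = ∑ j, ∑ k, θ j * θ k * ∑ x ∈ S, (x j : ℝ) * x k := by
        simp_rw [sq, sum_mul_sum, mul_sum]
        rw [sum_comm]
        refine sum_congr rfl fun j _ => ?_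
        rw [sum_comm]
        exact sum_congr rfl fun k _ => sum_congr rfl fun x _ => by ring
    _ = (#S : ℝ) * (n / Fintype.card ι) * ∑ j, θ j ^ 2 := by
        simp only [sum_coord_mul_coord hS, mul_ite, mul_zero, sum_ite_eq, mem_univ, if_true,
          mul_sum]
        exact sum_congr rfl fun j _ => by ring

end LatticeSphere

lemma even_sum_add_sum_sq {ι : Type*} [Fintype ι] (x : ι → ℤ) :
    Even (∑ j, x j + ∑ j, x j ^ 2) := by
  rw [← sum_add_distrib]
  refine even_sum _ fun j _ => ?_
  simpa only [mul_add, mul_one, sq, add_comm] using Int.even_mul_succ_self (x j)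

lemma cexp_dot_eq_neg_one_pow_mul_cexp_dot_half_shift {ι : Type*} [Fintype ι] {n : ℕ}
    {x : ι → ℤ} (hx : ∑ j, x j ^ 2 = (n : ℤ)) (ξ : ι → ℝ) (m : ι → ℤ) :
    cexp (2 * Real.pi * I * ∑ j, (ξ j : ℂ) * x j) =
      (-1) ^ n * cexp (2 * Real.pi * I * ∑ j, ((ξ j + 1 / 2 - m j : ℝ) : ℂ) * x j) := by
  obtain ⟨k, hk⟩ := even_sum_add_sum_sq x
  rw [hx] at hk
  have hkC : (∑ j, (x j : ℂ)) + n = k + k := by exact_mod_cast hk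
  have hexponent : n * (Real.pi * I) + 2 * Real.pi * I * ∑ j, ((ξ j + 1 / 2 - m j : ℝ) : ℂ) * x j
      = 2 * Real.pi * I * ∑ j, (ξ j : ℂ) * x j + (k - ∑ j, m j * x j : ℤ) * (2 * Real.pi * I) := by
    push_cast
    simp only [add_mul, sub_mul, sum_add_distrib, sum_sub_distrib, ← mul_sum]
    linear_combination (Real.pi * I) * hkC
  rw [← exp_pi_mul_I, ← exp_nat_mul, ← Complex.exp_add, hexponent, Complex.exp_add,
    exp_int_mul_two_pi_mul_I, mul_one]

lemma sum_cexp_eq_sum_cos {ι : Type*} [Fintype ι] {S : Finset (ι → ℤ)}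
    (hneg : ∀ x, -x ∈ S ↔ x ∈ S) (θ : ι → ℝ) :
    ∑ x ∈ S, cexp (2 * Real.pi * I * ∑ j, (θ j : ℂ) * x j) =
      ↑(∑ x ∈ S, Real.cos (2 * Real.pi * ∑ j, θ j * x j)) := by
  set φ : (ι → ℤ) → ℝ := fun x => 2 * Real.pi * ∑ j, θ j * x j
  have hφ (x : ι → ℤ) : φ (-x) = -φ x := by simp [φ, mul_sum]
  have hsin : ∑ x ∈ S, Real.sin (φ x) = 0 := by
    have h := sum_equiv (Equiv.neg (ι → ℤ)) (fun x => (hneg x).symm)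
      (fun x _ => rfl) (f := fun x => Real.sin (φ (-x))) (g := fun x => Real.sin (φ x))
    simp only [hφ, Real.sin_neg, sum_neg_distrib] at h
    linarith
  have hexp (x : ι → ℤ) : cexp (2 * Real.pi * I * ∑ j, (θ j : ℂ) * x j) =
      Real.cos (φ x) + Real.sin (φ x) * I := by
    rw [ofReal_cos, ofReal_sin, ← exp_mul_I]
    congr 1
    simp only [φ, ofReal_mul, ofReal_ofNat, ofReal_sum, ofReal_intCast]
    ring
  simp only [hexp, sum_add_distrib, ← sum_mul, ← ofReal_sum, hsin, ofReal_zero, zero_mul,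
    add_zero, φ]

lemma abs_cos_sub_one_le_sq_div_two (t : ℝ) : |Real.cos t - 1| ≤ t ^ 2 / 2 := by
  rw [abs_of_nonpos (by linarith [Real.cos_le_one t])]
  linarith [Real.one_sub_sq_div_two_le_cos (x := t)]

lemma norm_sum_cexp_sub_card_le {ι : Type*} [Fintype ι] {S : Finset (ι → ℤ)}
    (hneg : ∀ x, -x ∈ S ↔ x ∈ S) (θ : ι → ℝ) :
    ‖∑ x ∈ S, cexp (2 * Real.pi * I * ∑ j, (θ j : ℂ) * x j) - #S‖ ≤
      2 * Real.pi ^ 2 * ∑ x ∈ S, (∑ j, θ j * x j) ^ 2 := by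
  rw [sum_cexp_eq_sum_cos hneg, ← ofReal_natCast, ← ofReal_sub, norm_real, Real.norm_eq_abs,
    card_eq_sum_ones, Nat.cast_sum, Nat.cast_one, ← sum_sub_distrib, mul_sum]
  calc _ ≤ ∑ x ∈ S, |Real.cos (2 * Real.pi * ∑ j, θ j * x j) - 1| := abs_sum_le_sum_abs _ _
    _ ≤ ∑ x ∈ S, (2 * Real.pi * ∑ j, θ j * x j) ^ 2 / 2 :=
        sum_le_sum fun x _ => abs_cos_sub_one_le_sq_div_two _
    _ = _ := sum_congr rfl fun x _ => by ring

theorem multiplier_near_half_shift_general (d lam : ℕ)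
    (S : Finset (Fin d → ℤ)) (hS : ∀ x, x ∈ S ↔ ∑ j, (x j) ^ 2 = (lam : ℤ))
    (hne : S.Nonempty) (ξ : Fin d → ℝ) :
    ‖(S.card : ℂ)⁻¹ *
        (∑ x ∈ S, Complex.exp (2 * Real.pi * Complex.I *
          ∑ j, ((ξ j : ℝ) : ℂ) * (x j : ℂ))) - (-1) ^ lam‖ ≤
      2 * Real.pi ^ 2 * ((lam : ℝ) / d) *
        ∑ j, |ξ j + 1 / 2 - (round (ξ j + 1 / 2) : ℝ)| ^ 2 := by
  set θ : Fin d → ℝ := fun j => ξ j + 1 / 2 - round (ξ j + 1 / 2)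
  have hphase : ∑ x ∈ S, cexp (2 * Real.pi * I * ∑ j, (ξ j : ℂ) * x j) =
      (-1) ^ lam * ∑ x ∈ S, cexp (2 * Real.pi * I * ∑ j, (θ j : ℂ) * x j) := by
    rw [mul_sum]
    exact sum_congr rfl fun x hx =>
      cexp_dot_eq_neg_one_pow_mul_cexp_dot_half_shift ((hS x).1 hx) ξ _
  have hcard : (#S : ℂ) ≠ 0 := by exact_mod_cast hne.card_pos.ne'
  calc _ = (#S : ℝ)⁻¹ * ‖∑ x ∈ S, cexp (2 * Real.pi * I * ∑ j, (θ j : ℂ) * x j) - #S‖ := by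
        rw [hphase, show ∀ z : ℂ, (#S : ℂ)⁻¹ * ((-1) ^ lam * z) - (-1) ^ lam =
          (-1) ^ lam * ((#S : ℂ)⁻¹ * (z - #S)) from fun z => by field_simp]
        simp
    _ ≤ (#S : ℝ)⁻¹ * (2 * Real.pi ^ 2 * ∑ x ∈ S, (∑ j, θ j * x j) ^ 2) := by
        gcongr
        exact norm_sum_cexp_sub_card_le (fun x => by simp [hS]) θ
    _ = _ := by
        rw [sum_dot_sq hS θ, Fintype.card_fin]
        simp only [sq_abs, θ]
        field_simp

/-- Estimate of the discrete spherical multiplier near the half-shifted origin: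
`|𝔪_t(ξ) − (−1)^λ| ≤ 2π² κ(d,λ)² ‖ξ + (1/2,…,1/2)‖²` with `κ(d,λ)² = λ/d`. -/
theorem multiplier_near_half_shift (d lam : ℕ) (hd : 2 ≤ d) (hlam : 1 ≤ lam)
    (S : Finset (Fin d → ℤ)) (hS : ∀ x, x ∈ S ↔ ∑ j, (x j) ^ 2 = (lam : ℤ))
    (hne : S.Nonempty) (ξ : Fin d → ℝ) :
    ‖(S.card : ℂ)⁻¹ *
        (∑ x ∈ S, Complex.exp (2 * Real.pi * Complex.I *
          ∑ j, ((ξ j : ℝ) : ℂ) * (x j : ℂ))) - (-1) ^ lam‖ ≤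
      2 * Real.pi ^ 2 * ((lam : ℝ) / d) *
        ∑ j, |ξ j + 1 / 2 - (round (ξ j + 1 / 2) : ℝ)| ^ 2 :=
  multiplier_near_half_shift_general d lam S hS hne ξ
end

section
/- Let d ≥ 16 and λ ∈ ℕ. The singular series 𝔖_d(λ) := ∑_{q=1}^∞ ∑_{1≤p≤q, gcd(p,q)=1} e^{−2πiλp/q} G(p/q;0), where G(p/q;0) = q^{−d} ∑_{n ∈ {1,...,q}^d} e^{2πi|n|²p/q}, converges absolutely and satisfies 1/2 ≤ 𝔖_d(λ) ≤ 3/2. -/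
/-- The `q`-th term of the singular series `𝔖_d(λ)`:
`∑_{1 ≤ p ≤ q, gcd(p,q)=1} e^{−2πiλp/q} G(p/q; 0)`, where
`G(p/q;0) = q^{−d} ∑_{n ∈ {1,…,q}^d} e^{2πi|n|²p/q}`. -/
noncomputable def singularSeriesTerm (d lam q : ℕ) : ℂ :=
  ∑ p ∈ (Finset.Icc 1 q).filter (fun p => Nat.gcd p q = 1),
    Complex.exp ((-2) * Real.pi * Complex.I * (lam : ℂ) * (p : ℂ) / (q : ℂ)) *
      ((q : ℂ) ^ (-(d : ℤ)) *
        ∑ n ∈ Fintype.piFinset (fun _ : Fin d => Finset.Icc (1 : ℤ) (q : ℤ)),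
          Complex.exp (2 * Real.pi * Complex.I * (∑ j, (n j : ℂ) ^ 2) * (p : ℂ) / (q : ℂ)))

/-!
The terms `q = 1, 2` of the series are `1` and `0`. For `q ≥ 3`, expanding `|S|²` for the
one-dimensional Gauss sum `S = ∑ₓ e(p x² / q)` and substituting `x = y + h` leaves a
character sum over `y` that vanishes unless `2h = 0`, so `|S|² ≤ 2q` and
`|G(p/q; 0)| ≤ (2/q)^{d/2}`. Hence the `q`-th term is at most `q (2/q)⁸ ≤ (256/243) / q²`
once `d ≥ 16`, and comparing with `ζ(2) = π²/6` bounds the tail `q ≥ 3` by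
`(256/243)(π²/6 - 5/4) < 1/2`.
-/

open Finset Complex

theorem AddChar.norm_sum_mul_sq_sq_le {R : Type*} [CommRing R] [Fintype R] [DecidableEq R]
    {ψ : AddChar R ℂ} (hψ : ψ.IsPrimitive) {a : R} (ha : IsUnit a) :
    ‖∑ x, ψ (a * x ^ 2)‖ ^ 2 ≤ Fintype.card R * #{h : R | 2 * h = 0} := by
  set S := ∑ x, ψ (a * x ^ 2)
  have hS : S * starRingEnd ℂ S = ∑ h, ψ (a * h ^ 2) * ∑ y, ψ (y * (2 * a * h)) := calc
    S * starRingEnd ℂ S = ∑ x, ∑ y, ψ (a * x ^ 2) * ψ (-(a * y ^ 2)) := by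
      simp only [S, map_sum, ← AddChar.map_neg_eq_conj, sum_mul_sum]
    _ = ∑ y, ∑ h, ψ (a * (h + y) ^ 2) * ψ (-(a * y ^ 2)) := by
      rw [sum_comm]
      exact sum_congr rfl fun y _ => (Equiv.sum_comp (Equiv.addRight y) _).symm
    _ = ∑ h, ψ (a * h ^ 2) * ∑ y, ψ (y * (2 * a * h)) := by
      rw [sum_comm]
      refine sum_congr rfl fun h _ => ?_
      rw [mul_sum]
      refine sum_congr rfl fun y _ => ?_
      rw [← AddChar.map_add_eq_mul, ← AddChar.map_add_eq_mul]
      ring_nf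
  have hker (h : R) : 2 * a * h = 0 ↔ 2 * h = 0 := by
    rw [mul_right_comm, ha.mul_left_eq_zero]
  calc ‖S‖ ^ 2 = ‖S * starRingEnd ℂ S‖ := by
        rw [mul_conj', ← ofReal_pow, norm_real, Real.norm_of_nonneg (by positivity)]
    _ ≤ ∑ h, ‖∑ y, ψ (y * (2 * a * h))‖ := by
        rw [hS]
        refine (norm_sum_le _ _).trans (sum_le_sum fun h _ => ?_)
        rw [norm_mul, AddChar.norm_apply, one_mul]
    _ = Fintype.card R * #{h : R | 2 * h = 0} := by
        simp only [AddChar.sum_mulShift _ hψ, hker, apply_ite, Complex.norm_natCast]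
        rw [sum_ite, Nat.cast_zero, sum_const_zero, add_zero, sum_const, nsmul_eq_mul, mul_comm]

theorem ZMod.sum_Icc_intCast_s15 {M : Type*} [AddCommMonoid M] (q : ℕ) [NeZero q] (f : ZMod q → M) :
    ∑ n ∈ Icc (1 : ℤ) q, f n = ∑ x : ZMod q, f x := by
  have hinj : Set.InjOn (fun n : ℤ => (n : ZMod q)) (Icc (1 : ℤ) q) := by
    intro a ha b hb hab
    simp only [coe_Icc, Set.mem_Icc] at ha hb
    have := Int.eq_zero_of_abs_lt_dvd ((ZMod.intCast_eq_intCast_iff_dvd_sub a b q).mp hab)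
      (abs_sub_lt_iff.mpr ⟨by omega, by omega⟩)
    omega
  refine sum_nbij _ (fun _ _ => mem_univ _) hinj
    (surjOn_of_injOn_of_card_le _ (fun _ _ => mem_coe.mpr (mem_univ _)) hinj ?_) (fun _ _ => rfl)
  simp

theorem ZMod.card_two_mul_eq_zero_le_s15 (q : ℕ) [NeZero q] : #{h : ZMod q | 2 * h = 0} ≤ 2 := by
  refine (card_le_card fun h hh => ?_).trans (card_le_two (a := 0) (b := ((q / 2 : ℕ) : ZMod q)))
  rw [mem_filter] at hh
  have hdvd : q ∣ 2 * h.val := by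
    rw [← ZMod.natCast_eq_zero_iff, Nat.cast_mul, ZMod.natCast_val, ZMod.cast_id', id,
      Nat.cast_ofNat, hh.2]
  have hlt := h.val_lt
  obtain ⟨k, hk⟩ := hdvd
  have hk2 : k < 2 := by nlinarith
  rw [mem_insert, mem_singleton]
  interval_cases k
  · exact .inl ((ZMod.val_eq_zero h).mp (by omega))
  · exact .inr (by rw [← ZMod.natCast_zmod_val h]; congr 1; omega)

theorem ZMod.norm_sum_stdAddChar_mul_sq_le (q : ℕ) [NeZero q] {a : ZMod q} (ha : IsUnit a) :
    ‖∑ x : ZMod q, ZMod.stdAddChar (a * x ^ 2)‖ ≤ √(2 * q) := by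
  refine Real.le_sqrt_of_sq_le ?_
  calc ‖∑ x : ZMod q, ZMod.stdAddChar (a * x ^ 2)‖ ^ 2
      ≤ q * #{h : ZMod q | 2 * h = 0} := by
        simpa using AddChar.norm_sum_mul_sq_sq_le (ZMod.isPrimitive_stdAddChar q) ha
    _ ≤ q * 2 := by gcongr; exact_mod_cast ZMod.card_two_mul_eq_zero_le_s15 q
    _ = 2 * q := mul_comm _ _

/-- The normalized Gauss sum `G(p/q; 0)`. -/
noncomputable def normalizedGaussSum (d p q : ℕ) : ℂ :=
  (q : ℂ) ^ (-(d : ℤ)) *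
    ∑ n ∈ Fintype.piFinset (fun _ : Fin d => Icc (1 : ℤ) (q : ℤ)),
      exp (2 * Real.pi * I * (∑ j, (n j : ℂ) ^ 2) * (p : ℂ) / (q : ℂ))

theorem singularSeriesTerm_eq_sum_normalizedGaussSum (d lam q : ℕ) :
    singularSeriesTerm d lam q = ∑ p ∈ (Icc 1 q).filter (fun p => Nat.gcd p q = 1),
      exp ((-2) * Real.pi * I * (lam : ℂ) * (p : ℂ) / (q : ℂ)) * normalizedGaussSum d p q :=
  rfl

theorem normalizedGaussSum_eq_pow (d p q : ℕ) [NeZero q] :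
    normalizedGaussSum d p q =
      (q : ℂ) ^ (-(d : ℤ)) * (∑ x : ZMod q, ZMod.stdAddChar ((p : ZMod q) * x ^ 2)) ^ d := by
  have hexp (n : Fin d → ℤ) : exp (2 * Real.pi * I * (∑ j, (n j : ℂ) ^ 2) * p / q) =
      ∏ j, ZMod.stdAddChar ((p : ZMod q) * (n j : ZMod q) ^ 2) := by
    rw [mul_sum, sum_mul, sum_div, exp_sum]
    refine prod_congr rfl fun j _ => ?_
    rw [show (p : ZMod q) * (n j : ZMod q) ^ 2 = ((p * n j ^ 2 : ℤ) : ZMod q) by push_cast; rfl,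
      ZMod.stdAddChar_coe]
    push_cast
    ring_nf
  rw [normalizedGaussSum, sum_congr rfl fun n _ => hexp n,
    ← prod_univ_sum (fun _ => Icc (1 : ℤ) q)
      (fun _ m => ZMod.stdAddChar ((p : ZMod q) * (m : ZMod q) ^ 2)),
    prod_const, card_univ, Fintype.card_fin,
    ZMod.sum_Icc_intCast_s15 q fun x => ZMod.stdAddChar ((p : ZMod q) * x ^ 2)]

theorem norm_normalizedGaussSum_le (d : ℕ) {p q : ℕ} [NeZero q] (hp : p.Coprime q) :
    ‖normalizedGaussSum d p q‖ ≤ √(2 / q) ^ d := by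
  have hsqrt : √(2 / q) = √(2 * q) / q := by
    rw [Real.sqrt_mul zero_le_two, Real.sqrt_div zero_le_two, mul_div_assoc, Real.sqrt_div_self']
    ring
  rw [normalizedGaussSum_eq_pow, norm_mul, norm_pow, norm_zpow, Complex.norm_natCast, hsqrt,
    div_pow, zpow_neg, zpow_natCast, inv_mul_eq_div]
  gcongr
  exact ZMod.norm_sum_stdAddChar_mul_sq_le q ((ZMod.isUnit_iff_coprime p q).mpr hp)

theorem norm_singularSeriesTerm_le (d lam q : ℕ) [NeZero q] :
    ‖singularSeriesTerm d lam q‖ ≤ q * √(2 / q) ^ d := by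
  rw [singularSeriesTerm_eq_sum_normalizedGaussSum]
  calc _ ≤ ∑ p ∈ (Icc 1 q).filter (fun p => Nat.gcd p q = 1), √(2 / q) ^ d := by
        refine (norm_sum_le _ _).trans (sum_le_sum fun p hp => ?_)
        rw [norm_mul, norm_exp]
        simpa using norm_normalizedGaussSum_le d (mem_filter.mp hp).2
    _ ≤ q * √(2 / q) ^ d := by
        rw [sum_const, nsmul_eq_mul]
        gcongr
        exact_mod_cast (card_filter_le _ _).trans (Nat.card_Icc 1 q).le

theorem norm_singularSeriesTerm_le_of_three_le {d q : ℕ} (lam : ℕ) (hd : 16 ≤ d)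
    (hq : 3 ≤ q) :
    ‖singularSeriesTerm d lam q‖ ≤ 256 / 243 * (1 / (q : ℝ) ^ 2) := by
  have : NeZero q := ⟨by omega⟩
  have hq' : (3 : ℝ) ≤ q := by exact_mod_cast hq
  have hle : √(2 / q) ≤ 1 :=
    Real.sqrt_le_one.mpr ((div_le_one (by positivity)).mpr (by linarith))
  calc ‖singularSeriesTerm d lam q‖ ≤ q * √(2 / q) ^ d := norm_singularSeriesTerm_le d lam q
    _ ≤ q * √(2 / q) ^ 16 :=
        mul_le_mul_of_nonneg_left (pow_le_pow_of_le_one (Real.sqrt_nonneg _) hle hd) (by positivity)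
    _ = 256 / q ^ 7 := by
        rw [show 16 = 2 * 8 from rfl, pow_mul, Real.sq_sqrt (by positivity)]
        field_simp
        norm_num
    _ ≤ 256 / (3 ^ 5 * q ^ 2) := by
        gcongr
        calc (3 : ℝ) ^ 5 * q ^ 2 ≤ (q : ℝ) ^ 5 * q ^ 2 := by gcongr
          _ = (q : ℝ) ^ 7 := by ring
    _ = 256 / 243 * (1 / (q : ℝ) ^ 2) := by ring

theorem singularSeriesTerm_zero (d lam : ℕ) : singularSeriesTerm d lam 0 = 0 := by
  simp [singularSeriesTerm]

theorem singularSeriesTerm_one (d lam : ℕ) : singularSeriesTerm d lam 1 = 1 := by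
  rw [singularSeriesTerm_eq_sum_normalizedGaussSum,
    show (Icc 1 1).filter (fun p => Nat.gcd p 1 = 1) = {1} from rfl, sum_singleton,
    normalizedGaussSum_eq_pow]
  simpa using exp_eq_one_iff.mpr ⟨-lam, by push_cast; ring⟩

theorem singularSeriesTerm_two {d : ℕ} (lam : ℕ) (hd : d ≠ 0) :
    singularSeriesTerm d lam 2 = 0 := by
  rw [singularSeriesTerm_eq_sum_normalizedGaussSum,
    show (Icc 1 2).filter (fun p => Nat.gcd p 2 = 1) = {1} from rfl, sum_singleton,
    normalizedGaussSum_eq_pow]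
  have : ∑ x : ZMod 2, ZMod.stdAddChar (((1 : ℕ) : ZMod 2) * x ^ 2) = 0 := by
    rw [show (univ : Finset (ZMod 2)) = {0, 1} from rfl, sum_pair zero_ne_one]
    simp only [Nat.cast_one, one_mul, zero_pow two_ne_zero, one_pow, AddChar.map_zero_eq_one]
    rw [← Int.cast_one (R := ZMod 2), ZMod.stdAddChar_coe]
    push_cast
    rw [show 2 * (Real.pi : ℂ) * I * 1 / 2 = Real.pi * I by ring, exp_pi_mul_I]
    ring
  rw [this, zero_pow hd, mul_zero, mul_zero]

theorem hasSum_one_div_nat_add_three_sq :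
    HasSum (fun n : ℕ => 1 / ((n + 3 : ℕ) : ℝ) ^ 2) (Real.pi ^ 2 / 6 - 5 / 4) := by
  have hhead : ∑ i ∈ range 3, 1 / (i : ℝ) ^ 2 = 5 / 4 := by norm_num [sum_range_succ]
  simpa only [hhead] using (hasSum_nat_add_iff' 3).mpr hasSum_zeta_two

theorem singular_series_bounds_general (d lam : ℕ) (hd : 16 ≤ d) :
    Summable (fun q : ℕ => ‖singularSeriesTerm d lam q‖) ∧
      ‖(∑' q : ℕ, singularSeriesTerm d lam q) - 1‖ ≤ 1 / 2 := by
  have hmajorant := hasSum_one_div_nat_add_three_sq.mul_left (256 / 243)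
  have hbound (n : ℕ) :
      ‖singularSeriesTerm d lam (n + 3)‖ ≤ 256 / 243 * (1 / ((n + 3 : ℕ) : ℝ) ^ 2) :=
    norm_singularSeriesTerm_le_of_three_le lam hd (by omega)
  have htail : Summable fun n => ‖singularSeriesTerm d lam (n + 3)‖ :=
    hmajorant.summable.of_nonneg_of_le (fun _ => norm_nonneg _) hbound
  have hsum := (summable_nat_add_iff (f := fun q => ‖singularSeriesTerm d lam q‖) 3).mp htail
  refine ⟨hsum, ?_⟩
  have hhead : ∑ q ∈ range 3, singularSeriesTerm d lam q = 1 := by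
    simp [sum_range_succ, singularSeriesTerm_zero, singularSeriesTerm_one,
      singularSeriesTerm_two lam (by omega : d ≠ 0)]
  rw [← hsum.of_norm.sum_add_tsum_nat_add 3, hhead, add_sub_cancel_left]
  calc ‖∑' n, singularSeriesTerm d lam (n + 3)‖
      ≤ ∑' n, ‖singularSeriesTerm d lam (n + 3)‖ := norm_tsum_le_tsum_norm htail
    _ ≤ 256 / 243 * (Real.pi ^ 2 / 6 - 5 / 4) := hasSum_le hbound htail.hasSum hmajorant
    _ ≤ 1 / 2 := by nlinarith [Real.pi_lt_d2, Real.pi_pos]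

/-- For `d ≥ 16` and `λ ≥ 1` the singular series `𝔖_d(λ)` converges absolutely and
satisfies `1/2 ≤ 𝔖_d(λ) ≤ 3/2`, i.e. `|𝔖_d(λ) − 1| ≤ 1/2`. -/
theorem singular_series_bounds (d lam : ℕ) (hd : 16 ≤ d) (hlam : 1 ≤ lam) :
    Summable (fun q : ℕ => ‖singularSeriesTerm d lam q‖) ∧
      ‖(∑' q : ℕ, singularSeriesTerm d lam q) - 1‖ ≤ 1 / 2 :=
  singular_series_bounds_general d lam hd
end

section
/- Let δ₀ ∈ (0,1), δ₁ ∈ (0,1], and let (u_j)_{j=1}^d be reals with 0 ≤ u_j ≤ (1−δ₀)/2. Suppose I ⊆ {1,...,d} satisfies |I| ≥ δ₁ d, and let J = (d₀, d] ∩ ℤ for some 0 ≤ d₀ ≤ d. Then the average over all permutations τ of {1,...,d} of exp(−∑_{j ∈ τ(I) ∩ J} u_j) is at most 3 exp(−(δ₀δ₁/20) ∑_{j ∈ J} u_j). -/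
open Finset
namespace CvxAux
variable {d : ℕ}

noncomputable def Esym (d : ℕ) (a : Fin d → ℝ) (m : ℕ) : ℝ :=
  ∑ T ∈ (univ : Finset (Fin d)).powersetCard m, ∏ k ∈ T, a k

def seg (d m : ℕ) : Finset (Fin d) := univ.filter fun i : Fin d => (i : ℕ) < m

noncomputable def Aperm (d : ℕ) (a : Fin d → ℝ) (m : ℕ) : ℝ :=
  ∑ τ : Equiv.Perm (Fin d), ∏ i ∈ seg d m, a (τ i)

lemma seg_card (d m : ℕ) (hm : m ≤ d) : (seg d m).card = m := by
  have h : (seg d m).card = (Finset.range m).card := by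
    apply Finset.card_bij (fun (x : Fin d) _ => (x : ℕ))
    · intro x hx
      rw [Finset.mem_range]
      exact (Finset.mem_filter.mp hx).2
    · intro x hx y hy hxy
      exact Fin.val_injective hxy
    · intro j hj
      rw [Finset.mem_range] at hj
      exact ⟨⟨j, lt_of_lt_of_le hj hm⟩, Finset.mem_filter.mpr ⟨mem_univ _, hj⟩, rfl⟩
  simpa using h

lemma prod_anti (a : Fin d → ℝ) (h0 : ∀ k, 0 ≤ a k) (h1 : ∀ k, a k ≤ 1)
    (s t : Finset (Fin d)) (hst : s ⊆ t) : ∏ k ∈ t, a k ≤ ∏ k ∈ s, a k := by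
  rw [← Finset.prod_sdiff hst]
  calc (∏ k ∈ t \ s, a k) * ∏ k ∈ s, a k ≤ 1 * ∏ k ∈ s, a k := by
        apply mul_le_mul_of_nonneg_right
        · exact Finset.prod_le_one (fun i _ => h0 i) (fun i _ => h1 i)
        · exact Finset.prod_nonneg fun i _ => h0 i
    _ = ∏ k ∈ s, a k := one_mul _

lemma Aperm_anti (a : Fin d → ℝ) (h0 : ∀ k, 0 ≤ a k) (h1 : ∀ k, a k ≤ 1)
    {m m' : ℕ} (h : m ≤ m') : Aperm d a m' ≤ Aperm d a m := by
  refine Finset.sum_le_sum fun τ _ => ?_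
  apply prod_anti _ (fun k => h0 _) (fun k => h1 _)
  intro x hx
  rw [seg, Finset.mem_filter] at hx ⊢
  exact ⟨hx.1, lt_of_lt_of_le hx.2 h⟩

lemma Aperm_nonneg (a : Fin d → ℝ) (h0 : ∀ k, 0 ≤ a k) (m : ℕ) : 0 ≤ Aperm d a m :=
  Finset.sum_nonneg fun τ _ => Finset.prod_nonneg fun i _ => h0 _

lemma bern_expand (a : Fin d → ℝ) (p q : ℝ) :
    ∏ k, (p * a k + q)
      = ∑ m ∈ Finset.range (d + 1), p ^ m * q ^ (d - m) * Esym d a m := by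
  classical
  have hcard : (univ : Finset (Fin d)).card = d := by simp
  rw [Finset.prod_add, powerset_card_disjiUnion]
  erw [Finset.sum_disjiUnion]
  rw [hcard]
  refine Finset.sum_congr rfl fun m hm => ?_
  rw [Esym, Finset.mul_sum]
  refine Finset.sum_congr rfl fun T hT => ?_
  rw [mem_powersetCard_univ] at hT
  have hsd : (univ \ T).card = d - m := by
    rw [Finset.card_sdiff_of_subset (subset_univ T), hcard, hT]
  rw [Finset.prod_mul_distrib, Finset.prod_const, Finset.prod_const, hT, hsd]
  ring

lemma binom_sum_one (p q : ℝ) (hpq : p + q = 1) :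
    ∑ m ∈ Finset.range (d + 1), p ^ m * q ^ (d - m) * (d.choose m : ℝ) = 1 := by
  rw [← add_pow p q d, hpq, one_pow]

lemma binom_mean (hd : 0 < d) (p q : ℝ) (hpq : p + q = 1) :
    ∑ m ∈ Finset.range (d + 1),
        (m : ℝ) * (p ^ m * q ^ (d - m) * (d.choose m : ℝ)) = d * p := by
  rw [Finset.sum_range_succ']
  simp only [Nat.cast_zero, zero_mul, add_zero]
  have hd1 : d - 1 + 1 = d := Nat.succ_pred_eq_of_pos hd
  have hterm : ∀ k, ((k + 1 : ℕ) : ℝ) * (p ^ (k + 1) * q ^ (d - (k + 1)) * (d.choose (k + 1) : ℝ))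
      = (d : ℝ) * p * (p ^ k * q ^ (d - 1 - k) * ((d - 1).choose k : ℝ)) := by
    intro k
    have h1 : d * ((d - 1).choose k) = d.choose (k + 1) * (k + 1) := by
      have := Nat.add_one_mul_choose_eq (d - 1) k
      rwa [hd1] at this
    have h2 : d - (k + 1) = d - 1 - k := by omega
    have h1' : (d : ℝ) * ((d - 1).choose k : ℝ) = (d.choose (k + 1) : ℝ) * ((k : ℝ) + 1) := by
      exact_mod_cast congrArg (Nat.cast (R := ℝ)) h1
    rw [h2]
    push_cast
    linear_combination (-(p ^ (k + 1) * q ^ (d - 1 - k))) * h1'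
  have hbin := add_pow p q (d - 1)
  rw [hd1, hpq, one_pow] at hbin
  rw [Finset.sum_congr rfl fun k _ => hterm k, ← Finset.mul_sum, ← hbin, mul_one]


lemma exists_perm_image (I T : Finset (Fin d)) (h : I.card = T.card) :
    ∃ π : Equiv.Perm (Fin d), I.image π = T := by
  classical
  have hm : Fintype.card {x : Fin d // x ∈ I} = Fintype.card {x : Fin d // x ∈ T} := by
    simpa [Fintype.card_coe] using h
  have hc : Fintype.card {x : Fin d // x ∉ I} = Fintype.card {x : Fin d // x ∉ T} := by
    rw [Fintype.card_subtype_compl, Fintype.card_subtype_compl, hm]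
  let e₁ := Fintype.equivOfCardEq hm
  let e₂ := Fintype.equivOfCardEq hc
  refine ⟨Equiv.subtypeCongr e₁ e₂, ?_⟩
  apply Finset.eq_of_subset_of_card_le
  · intro x hx
    rw [Finset.mem_image] at hx
    obtain ⟨i, hi, rfl⟩ := hx
    have : Equiv.subtypeCongr e₁ e₂ i = (e₁ ⟨i, hi⟩ : Fin d) := by
      simp [Equiv.subtypeCongr, hi]
    rw [this]
    exact (e₁ ⟨i, hi⟩).2
  · rw [Finset.card_image_of_injective _ (Equiv.injective _), h]


lemma sum_perm_prod_congr (a : Fin d → ℝ) (I I' : Finset (Fin d)) (h : I.card = I'.card) :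
    ∑ τ : Equiv.Perm (Fin d), ∏ i ∈ I, a (τ i)
      = ∑ τ : Equiv.Perm (Fin d), ∏ i ∈ I', a (τ i) := by
  obtain ⟨π, hπ⟩ := exists_perm_image I' I h.symm
  calc ∑ τ : Equiv.Perm (Fin d), ∏ i ∈ I, a (τ i)
      = ∑ τ : Equiv.Perm (Fin d), ∏ i ∈ I', a ((τ * π) i) := by
        refine Finset.sum_congr rfl fun τ _ => ?_
        rw [← hπ, Finset.prod_image (fun x _ y _ hxy => π.injective hxy)]
        rfl
    _ = _ := Fintype.sum_equiv (Equiv.mulRight π) _ _ (fun τ => rfl)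

lemma counting (a : Fin d → ℝ) (m : ℕ) (I : Finset (Fin d)) (hI : I.card = m) :
    (d.choose m : ℝ) * ∑ τ : Equiv.Perm (Fin d), ∏ i ∈ I, a (τ i)
      = (d.factorial : ℝ) *
        ∑ T ∈ (univ : Finset (Fin d)).powersetCard m, ∏ k ∈ T, a k := by
  classical
  set φ : Equiv.Perm (Fin d) → Finset (Fin d) := fun τ => I.image τ with hφ
  have hmaps : ∀ τ : Equiv.Perm (Fin d), τ ∈ (univ : Finset (Equiv.Perm (Fin d))) →
      φ τ ∈ (univ : Finset (Fin d)).powersetCard m := by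
    intro τ _
    rw [mem_powersetCard_univ, hφ, Finset.card_image_of_injective _ (Equiv.injective _), hI]
  -- fibers all have the same cardinality
  have hfib : ∀ T ∈ (univ : Finset (Fin d)).powersetCard m,
      ((univ : Finset (Equiv.Perm (Fin d))).filter fun τ => φ τ = T).card
        = ((univ : Finset (Equiv.Perm (Fin d))).filter fun τ => φ τ = I).card := by
    intro T hT
    rw [mem_powersetCard_univ] at hT
    obtain ⟨σ, hσ⟩ := exists_perm_image T I (hT.trans hI.symm)
    apply Finset.card_bij' (fun τ _ => σ * τ) (fun τ _ => σ⁻¹ * τ)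
    · intro τ hτ
      rw [Finset.mem_filter] at hτ ⊢
      refine ⟨mem_univ _, ?_⟩
      show I.image ⇑(σ * τ) = I
      have h3 : I.image ⇑τ = T := hτ.2
      rw [show ⇑(σ * τ) = ⇑σ ∘ ⇑τ from rfl, ← Finset.image_image, h3, hσ]
    · intro τ hτ
      rw [Finset.mem_filter] at hτ ⊢
      refine ⟨mem_univ _, ?_⟩
      show I.image ⇑(σ⁻¹ * τ) = T
      have h3 : I.image ⇑τ = I := hτ.2
      rw [show ⇑(σ⁻¹ * τ) = ⇑σ⁻¹ ∘ ⇑τ from rfl, ← Finset.image_image, h3, ← hσ,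
        Finset.image_image]
      have : ⇑σ⁻¹ ∘ ⇑σ = id := by ext x; simp
      rw [this, Finset.image_id]
    · intro τ _; group
    · intro τ _; group
  set c : ℕ := ((univ : Finset (Equiv.Perm (Fin d))).filter fun τ => φ τ = I).card with hc
  -- total count
  have htot : d.factorial = (d.choose m) * c := by
    have h1 : (univ : Finset (Equiv.Perm (Fin d))).card
        = ∑ T ∈ (univ : Finset (Fin d)).powersetCard m,
            ((univ : Finset (Equiv.Perm (Fin d))).filter fun τ => φ τ = T).card :=
      Finset.card_eq_sum_card_fiberwise hmaps
    rw [Finset.card_univ, Fintype.card_perm, Fintype.card_fin] at h1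
    rw [h1, Finset.sum_congr rfl hfib, Finset.sum_const, smul_eq_mul,
      Finset.card_powersetCard, Finset.card_univ, Fintype.card_fin]
  -- sum over fibers
  have hA : ∑ τ : Equiv.Perm (Fin d), ∏ i ∈ I, a (τ i)
      = (c : ℝ) * ∑ T ∈ (univ : Finset (Fin d)).powersetCard m, ∏ k ∈ T, a k := by
    have h2 : ∀ τ : Equiv.Perm (Fin d), ∏ i ∈ I, a (τ i) = ∏ k ∈ φ τ, a k := by
      intro τ
      rw [hφ, Finset.prod_image]
      intro x _ y _ hxy; exact τ.injective hxy
    calc ∑ τ : Equiv.Perm (Fin d), ∏ i ∈ I, a (τ i)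
        = ∑ τ : Equiv.Perm (Fin d), ∏ k ∈ φ τ, a k := by
          exact Finset.sum_congr rfl fun τ _ => h2 τ
      _ = ∑ T ∈ (univ : Finset (Fin d)).powersetCard m,
            ∑ τ ∈ (univ : Finset (Equiv.Perm (Fin d))).filter fun τ => φ τ = T,
              ∏ k ∈ φ τ, a k := (Finset.sum_fiberwise_of_maps_to hmaps _).symm
      _ = ∑ T ∈ (univ : Finset (Fin d)).powersetCard m,
            (((univ : Finset (Equiv.Perm (Fin d))).filter fun τ => φ τ = T).card : ℝ)
              * ∏ k ∈ T, a k := by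
          refine Finset.sum_congr rfl fun T hT => ?_
          have hcg : ∀ τ ∈ (univ : Finset (Equiv.Perm (Fin d))).filter fun τ => φ τ = T,
              ∏ k ∈ φ τ, a k = ∏ k ∈ T, a k := by
            intro τ hτ; rw [(Finset.mem_filter.mp hτ).2]
          rw [Finset.sum_congr rfl hcg, Finset.sum_const, nsmul_eq_mul]
      _ = (c : ℝ) * ∑ T ∈ (univ : Finset (Fin d)).powersetCard m, ∏ k ∈ T, a k := by
          rw [Finset.mul_sum]
          refine Finset.sum_congr rfl fun T hT => ?_
          rw [hfib T hT, hc]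
  rw [hA, ← mul_assoc, ← Nat.cast_mul, ← htot]


lemma core (hd : 0 < d) (a : Fin d → ℝ) (h0 : ∀ k, 0 ≤ a k) (h1 : ∀ k, a k ≤ 1)
    (I : Finset (Fin d)) (hn1 : 1 ≤ I.card) :
    (∑ τ : Equiv.Perm (Fin d), ∏ i ∈ I, a (τ i)) / (d.factorial : ℝ)
      ≤ 2 * ∏ k, ((I.card : ℝ) / (2 * d) * a k + (1 - (I.card : ℝ) / (2 * d))) := by
  classical
  set n := I.card with hn
  set p : ℝ := (n : ℝ) / (2 * d) with hp
  set q : ℝ := 1 - p with hq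
  have hd' : (0 : ℝ) < d := by exact_mod_cast hd
  have hnd : n ≤ d := by
    rw [hn]
    exact (Finset.card_le_univ I).trans_eq (by simp)
  have hn1' : (1 : ℝ) ≤ n := by exact_mod_cast hn1
  have hp0 : 0 < p := by rw [hp]; positivity
  have hple : p ≤ 1 / 2 := by
    rw [hp, div_le_div_iff₀ (by positivity) (by norm_num)]
    have : (n : ℝ) ≤ d := by exact_mod_cast hnd
    nlinarith
  have hq0 : 0 ≤ q := by rw [hq]; linarith
  have hpq : p + q = 1 := by rw [hq]; ring
  have hfact0 : (0 : ℝ) < (d.factorial : ℝ) := by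
    exact_mod_cast d.factorial_pos
  -- the permutation sum equals `Aperm d a n`
  have hAn : (∑ τ : Equiv.Perm (Fin d), ∏ i ∈ I, a (τ i)) = Aperm d a n :=
    sum_perm_prod_congr a I (seg d n) (by rw [seg_card d n hnd])
  -- counting identity
  have hcount : ∀ m, m ≤ d → (d.choose m : ℝ) * Aperm d a m = (d.factorial : ℝ) * Esym d a m :=
    fun m hm => counting a m (seg d m) (seg_card d m hm)
  -- lower bound for Esym in terms of Aperm n
  have hElow : ∀ m, m ≤ d → m ≤ n →
      (d.choose m : ℝ) * (Aperm d a n / (d.factorial : ℝ)) ≤ Esym d a m := by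
    intro m hmd hmn
    have h1' : (d.choose m : ℝ) * Aperm d a n ≤ (d.choose m : ℝ) * Aperm d a m :=
      mul_le_mul_of_nonneg_left (Aperm_anti a h0 h1 hmn) (by positivity)
    rw [hcount m hmd] at h1'
    rw [← mul_div_assoc, div_le_iff₀ hfact0]
    calc (d.choose m : ℝ) * Aperm d a n ≤ (d.factorial : ℝ) * Esym d a m := h1'
      _ = Esym d a m * (d.factorial : ℝ) := by ring
  -- Markov bound: mass of small sizes
  have hmean' := binom_mean hd p q hpq
  have hsum1 := binom_sum_one (d := d) p q hpq
  have hdp : (d : ℝ) * p = (n : ℝ) / 2 := by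
    rw [hp]
    field_simp
  have htail : ∑ m ∈ (Finset.range (d + 1)).filter (fun m => ¬ m ≤ n),
      p ^ m * q ^ (d - m) * (d.choose m : ℝ) ≤ 1 / 2 := by
    have step1 : ∑ m ∈ (Finset.range (d + 1)).filter (fun m => ¬ m ≤ n),
        p ^ m * q ^ (d - m) * (d.choose m : ℝ)
        ≤ ∑ m ∈ (Finset.range (d + 1)).filter (fun m => ¬ m ≤ n),
            ((m : ℝ) / ((n : ℝ) + 1)) * (p ^ m * q ^ (d - m) * (d.choose m : ℝ)) := by
      refine Finset.sum_le_sum fun m hm => ?_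
      have hm' : n + 1 ≤ m := by
        have := (Finset.mem_filter.mp hm).2
        omega
      have hm'' : (1 : ℝ) ≤ (m : ℝ) / ((n : ℝ) + 1) := by
        rw [le_div_iff₀ (by positivity), one_mul]
        exact_mod_cast hm'
      have hnn : (0 : ℝ) ≤ p ^ m * q ^ (d - m) * (d.choose m : ℝ) := by positivity
      nlinarith [hnn]
    have step2 : ∑ m ∈ (Finset.range (d + 1)).filter (fun m => ¬ m ≤ n),
        ((m : ℝ) / ((n : ℝ) + 1)) * (p ^ m * q ^ (d - m) * (d.choose m : ℝ))
        ≤ ∑ m ∈ Finset.range (d + 1),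
            ((m : ℝ) / ((n : ℝ) + 1)) * (p ^ m * q ^ (d - m) * (d.choose m : ℝ)) := by
      refine Finset.sum_le_sum_of_subset_of_nonneg (Finset.filter_subset _ _) ?_
      intro m _ _
      positivity
    have step3 : ∑ m ∈ Finset.range (d + 1),
        ((m : ℝ) / ((n : ℝ) + 1)) * (p ^ m * q ^ (d - m) * (d.choose m : ℝ))
        = ((n : ℝ) / 2) / ((n : ℝ) + 1) := by
      rw [← hdp, ← hmean', Finset.sum_div]
      refine Finset.sum_congr rfl fun m _ => ?_
      ring
    have step4 : ((n : ℝ) / 2) / ((n : ℝ) + 1) ≤ 1 / 2 := by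
      rw [div_le_div_iff₀ (by positivity) (by norm_num)]
      nlinarith
    linarith
  have hgood : (1 : ℝ) / 2 ≤ ∑ m ∈ (Finset.range (d + 1)).filter (fun m => m ≤ n),
      p ^ m * q ^ (d - m) * (d.choose m : ℝ) := by
    have := Finset.sum_filter_add_sum_filter_not (Finset.range (d + 1)) (fun m => m ≤ n)
      (fun m => p ^ m * q ^ (d - m) * (d.choose m : ℝ))
    rw [hsum1] at this
    linarith
  -- main chain
  have hchain : (1 / 2 : ℝ) * (Aperm d a n / (d.factorial : ℝ)) ≤ ∏ k, (p * a k + q) := by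
    rw [bern_expand a p q]
    have hAq : 0 ≤ Aperm d a n / (d.factorial : ℝ) :=
      div_nonneg (Aperm_nonneg a h0 n) hfact0.le
    calc (1 / 2 : ℝ) * (Aperm d a n / (d.factorial : ℝ))
        ≤ (∑ m ∈ (Finset.range (d + 1)).filter (fun m => m ≤ n),
              p ^ m * q ^ (d - m) * (d.choose m : ℝ)) * (Aperm d a n / (d.factorial : ℝ)) :=
          mul_le_mul_of_nonneg_right hgood hAq
      _ = ∑ m ∈ (Finset.range (d + 1)).filter (fun m => m ≤ n),
            p ^ m * q ^ (d - m) * ((d.choose m : ℝ) * (Aperm d a n / (d.factorial : ℝ))) := by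
          rw [Finset.sum_mul]
          refine Finset.sum_congr rfl fun m _ => ?_
          ring
      _ ≤ ∑ m ∈ (Finset.range (d + 1)).filter (fun m => m ≤ n),
            p ^ m * q ^ (d - m) * Esym d a m := by
          refine Finset.sum_le_sum fun m hm => ?_
          have hm1 := Finset.mem_filter.mp hm
          have hmd : m ≤ d := by
            have := Finset.mem_range.mp hm1.1
            omega
          exact mul_le_mul_of_nonneg_left (hElow m hmd hm1.2)
            (mul_nonneg (pow_nonneg hp0.le m) (pow_nonneg hq0 (d - m)))
      _ ≤ ∑ m ∈ Finset.range (d + 1), p ^ m * q ^ (d - m) * Esym d a m := by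
          refine Finset.sum_le_sum_of_subset_of_nonneg (Finset.filter_subset _ _) ?_
          intro m _ _
          have : 0 ≤ Esym d a m :=
            Finset.sum_nonneg fun T _ => Finset.prod_nonneg fun k _ => h0 k
          positivity
  rw [hAn]
  linarith

end CvxAux

set_option maxHeartbeats 1000000 in
/-- Convexity lemma: for `0 ≤ u_j ≤ (1−δ₀)/2`, `|I| ≥ δ₁ d` and `J = (d₀, d]`
(in 0-based indexing, `J = {j : d₀ ≤ j}`), the average over permutations `τ` of
`exp(−∑_{j ∈ τ(I) ∩ J} u_j)` is at most `3 exp(−(δ₀δ₁/20) ∑_{j ∈ J} u_j)`. -/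
theorem convexity_lemma (d : ℕ) (δ₀ δ₁ : ℝ)
    (hδ₀ : δ₀ ∈ Set.Ioo (0 : ℝ) 1) (hδ₁ : δ₁ ∈ Set.Ioc (0 : ℝ) 1)
    (u : Fin d → ℝ) (hu : ∀ j, 0 ≤ u j ∧ u j ≤ (1 - δ₀) / 2)
    (I : Finset (Fin d)) (hI : δ₁ * d ≤ I.card)
    (d₀ : ℕ) (hd₀ : d₀ ≤ d) :
    (∑ τ : Equiv.Perm (Fin d),
        Real.exp (-(∑ j ∈ (I.image τ) ∩
          (Finset.univ.filter fun j : Fin d => d₀ ≤ (j : ℕ)), u j))) /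
      (Nat.factorial d : ℝ) ≤
    3 * Real.exp (-(δ₀ * δ₁ / 20) *
      ∑ j ∈ Finset.univ.filter (fun j : Fin d => d₀ ≤ (j : ℕ)), u j) := by
  classical
  obtain ⟨hδ₀0, hδ₀1⟩ := hδ₀
  obtain ⟨hδ₁0, hδ₁1⟩ := hδ₁
  rcases Nat.eq_zero_or_pos d with hd0 | hd
  · subst hd0
    have hI0 : ∀ s : Finset (Fin 0), s = ∅ := fun s => Finset.eq_empty_of_isEmpty s
    simp [hI0]
  -- main case
  have hd' : (0 : ℝ) < d := by exact_mod_cast hd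
  set v : Fin d → ℝ := fun j => if d₀ ≤ (j : ℕ) then u j else 0 with hv
  set a : Fin d → ℝ := fun j => Real.exp (-v j) with ha
  have hv0 : ∀ j, 0 ≤ v j := by
    intro j
    rw [hv]
    dsimp only
    split
    · exact (hu j).1
    · exact le_refl 0
  have hvhalf : ∀ j, v j ≤ 1 / 2 := by
    intro j
    rw [hv]
    dsimp only
    split
    · linarith [(hu j).2]
    · norm_num
  have ha0 : ∀ k, 0 ≤ a k := fun k => (Real.exp_pos _).le
  have ha1 : ∀ k, a k ≤ 1 := by
    intro k
    rw [ha]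
    dsimp only
    calc Real.exp (-v k) ≤ Real.exp 0 := Real.exp_le_exp.mpr (by linarith [hv0 k])
      _ = 1 := Real.exp_zero
  have hcard1 : 1 ≤ I.card := by
    by_contra h
    push_neg at h
    have h0 : I.card = 0 := by omega
    rw [h0] at hI
    push_cast at hI
    nlinarith
  set n := I.card with hn
  set p : ℝ := (n : ℝ) / (2 * d) with hp
  have hnd : n ≤ d := (Finset.card_le_univ I).trans_eq (by simp)
  have hn1' : (1 : ℝ) ≤ n := by exact_mod_cast hcard1
  have hp0 : 0 < p := by rw [hp]; positivity
  have hple : p ≤ 1 / 2 := by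
    rw [hp, div_le_div_iff₀ (by positivity) (by norm_num)]
    have : (n : ℝ) ≤ d := by exact_mod_cast hnd
    nlinarith
  have hplow : δ₁ / 2 ≤ p := by
    rw [hp, div_le_div_iff₀ (by norm_num) (by positivity)]
    nlinarith
  set V : ℝ := ∑ j ∈ Finset.univ.filter (fun j : Fin d => d₀ ≤ (j : ℕ)), u j with hV
  have hVv : ∑ k, v k = V := by
    rw [hV, hv, Finset.sum_filter]
  have hV0 : 0 ≤ V := by
    rw [← hVv]
    exact Finset.sum_nonneg fun k _ => hv0 k
  -- rewrite each summand
  have hterm : ∀ τ : Equiv.Perm (Fin d),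
      Real.exp (-(∑ j ∈ (I.image τ) ∩
          (Finset.univ.filter fun j : Fin d => d₀ ≤ (j : ℕ)), u j))
        = ∏ i ∈ I, a (τ i) := by
    intro τ
    have h1 : (I.image τ) ∩ (Finset.univ.filter fun j : Fin d => d₀ ≤ (j : ℕ))
        = (I.image τ).filter (fun j : Fin d => d₀ ≤ (j : ℕ)) := by
      ext x
      simp only [Finset.mem_inter, Finset.mem_filter, Finset.mem_univ, true_and]
    have h2 : ∑ j ∈ (I.image τ).filter (fun j : Fin d => d₀ ≤ (j : ℕ)), u j
        = ∑ j ∈ I.image τ, v j := by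
      rw [Finset.sum_filter]
    rw [h1, h2, ← Finset.sum_neg_distrib, Real.exp_sum,
      Finset.prod_image (fun x _ y _ hxy => τ.injective hxy)]
  rw [Finset.sum_congr rfl fun τ _ => hterm τ]
  -- apply the core bound
  have hcore := CvxAux.core hd a ha0 ha1 I hcard1
  rw [← hn, ← hp] at hcore
  -- bound the product
  have hfac : ∀ k, p * a k + (1 - p) ≤ Real.exp (-(p * (1 - a k))) := by
    intro k
    have := Real.add_one_le_exp (-(p * (1 - a k)))
    linarith
  have hprod : ∏ k, (p * a k + (1 - p)) ≤ Real.exp (-(p * ∑ k, (1 - a k))) := by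
    calc ∏ k, (p * a k + (1 - p))
        ≤ ∏ k, Real.exp (-(p * (1 - a k))) := by
          apply Finset.prod_le_prod
          · intro k _
            have := ha0 k
            nlinarith [hple, hp0]
          · intro k _
            exact hfac k
      _ = Real.exp (∑ k, -(p * (1 - a k))) := (Real.exp_sum _ _).symm
      _ = Real.exp (-(p * ∑ k, (1 - a k))) := by
          rw [Finset.sum_neg_distrib, ← Finset.mul_sum]
  -- lower bound on the deficiency sum
  have hdef : (2 / 3 : ℝ) * V ≤ ∑ k, (1 - a k) := by
    rw [← hVv, Finset.mul_sum]
    apply Finset.sum_le_sum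
    intro k _
    have hE : a k * (1 + v k) ≤ 1 := by
      have h15 : v k + 1 ≤ Real.exp (v k) := Real.add_one_le_exp (v k)
      have h16 : a k * Real.exp (v k) = 1 := by
        rw [ha]
        dsimp only
        rw [← Real.exp_add]
        simp
      nlinarith [ha0 k]
    nlinarith [hv0 k, hvhalf k, ha0 k, hE]
  -- combine exponents
  have hexps : -(p * ∑ k, (1 - a k)) ≤ -(δ₀ * δ₁ / 20) * V := by
    have h1 : (δ₀ * δ₁ / 20) * V ≤ (δ₁ / 2) * ((2 / 3) * V) := by
      nlinarith [mul_nonneg (mul_nonneg hδ₁0.le hV0)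
        (show (0:ℝ) ≤ 1 / 3 - δ₀ / 20 by linarith)]
    have h3 : 0 ≤ ∑ k, (1 - a k) := le_trans (by linarith : (0:ℝ) ≤ 2 / 3 * V) hdef
    have h2 : (δ₁ / 2) * ((2 / 3) * V) ≤ p * ∑ k, (1 - a k) :=
      calc (δ₁ / 2) * ((2 / 3) * V) ≤ (δ₁ / 2) * ∑ k, (1 - a k) :=
            mul_le_mul_of_nonneg_left hdef (by linarith)
        _ ≤ p * ∑ k, (1 - a k) := mul_le_mul_of_nonneg_right hplow h3
    linarith
  calc (∑ τ : Equiv.Perm (Fin d), ∏ i ∈ I, a (τ i)) / (d.factorial : ℝ)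
      ≤ 2 * ∏ k, (p * a k + (1 - p)) := hcore
    _ ≤ 2 * Real.exp (-(p * ∑ k, (1 - a k))) := by linarith [hprod]
    _ ≤ 2 * Real.exp (-(δ₀ * δ₁ / 20) * V) := by
        have := Real.exp_le_exp.mpr hexps
        linarith
    _ ≤ 3 * Real.exp (-(δ₀ * δ₁ / 20) * V) := by
        have := Real.exp_pos (-(δ₀ * δ₁ / 20) * V)
        linarith
end
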